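/- arXiv:1405.4753 — 10 statements merged into one kernel-verified Lean document; each statement's English description precedes it below -/
import Mathlib

section
/- Let G be a group, H ≤ G, A ≤ G with AH = G. If U, V are subgroups with H ≤ U, V ≤ G, then (U ∩ V) ∩ A = (U ∩ A) ∩ (V ∩ A) and ⟨U, V⟩ ∩ A = ⟨U ∩ A, V ∩ A⟩, where ⟨·,·⟩ denotes the subgroup generated. -/
/-!
Since `G = AH`, every subgroup `W ≥ H` factors as `W = (W ∩ A) H`. Put
`K = ⟨U ∩ A, V ∩ A⟩`. Right multiplication by `U = (U ∩ A) H` maps the set `KH` into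
`K (U ∩ A) H ⊆ KH`, and likewise for `V`, so `⟨U, V⟩ ⊆ KH`. Intersecting with `A ≥ K`
gives `⟨U, V⟩ ∩ A ⊆ K (H ∩ A) ⊆ K`.
-/

open scoped Pointwise

namespace Subgroup

variable {G : Type*} [Group G]

theorem coe_sup_subset_of_mul_subset {P : Set G} (hP : 1 ∈ P) {U V : Subgroup G}
    (hU : P * U ⊆ P) (hV : P * V ⊆ P) : ((U ⊔ V : Subgroup G) : Set G) ⊆ P := by
  have hUV : P * (U ∪ V : Set G) ⊆ P := by
    rw [Set.mul_union]; exact Set.union_subset hU hV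
  suffices h : ∀ g ∈ U ⊔ V, ∀ p ∈ P, p * g ∈ P from
    fun g hg => one_mul g ▸ h g hg 1 hP
  intro g hg
  rw [sup_eq_closure] at hg
  induction hg using closure_induction'' with
  | mem x hx => exact fun p hp => hUV (Set.mul_mem_mul hp hx)
  | inv_mem x hx =>
    have hx' : x⁻¹ ∈ (U ∪ V : Set G) := hx.imp U.inv_mem V.inv_mem
    exact fun p hp => hUV (Set.mul_mem_mul hp hx')
  | one => exact fun p hp => (mul_one p).symm ▸ hp
  | mul x y _ _ hx hy => exact fun p hp => mul_assoc p x y ▸ hy _ (hx p hp)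

variable {H A : Subgroup G}

theorem coe_inf_mul_eq_of_mul_eq_univ (hAH : (A : Set G) * (H : Set G) = Set.univ)
    {W : Subgroup G} (hHW : H ≤ W) : ((W ⊓ A : Subgroup G) : Set G) * H = W := by
  rw [inf_mul_assoc W A H hHW, hAH, Set.inter_univ]

theorem coe_mul_mul_subset_of_inf_le (hAH : (A : Set G) * (H : Set G) = Set.univ)
    {K W : Subgroup G} (hHW : H ≤ W) (hWK : W ⊓ A ≤ K) :
    (K : Set G) * H * W ⊆ (K : Set G) * H := calc
  (K : Set G) * H * W ⊆ K * W * W := by gcongr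
  _ = K * ((W ⊓ A : Subgroup G) * H) := by
    rw [mul_assoc, coe_mul_coe, coe_inf_mul_eq_of_mul_eq_univ hAH hHW]
  _ ⊆ K * K * H := by rw [← mul_assoc]; gcongr
  _ = K * H := by rw [coe_mul_coe]

end Subgroup

open Subgroup in
/-- For `G = AH` and subgroups `U, V` containing `H`, the map `W ↦ W ⊓ A`
respects intersections and joins. -/
theorem stmt_3 {G : Type*} [Group G] (H A U V : Subgroup G)
    (hAH : (A : Set G) * (H : Set G) = Set.univ)
    (hHU : H ≤ U) (hHV : H ≤ V) :
    (U ⊓ V) ⊓ A = (U ⊓ A) ⊓ (V ⊓ A) ∧ (U ⊔ V) ⊓ A = (U ⊓ A) ⊔ (V ⊓ A) := by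
  refine ⟨inf_inf_distrib_right U V A, le_antisymm ?_ ?_⟩
  · set K := (U ⊓ A) ⊔ (V ⊓ A)
    have hKA : K ≤ A := sup_le inf_le_right inf_le_right
    have hUV : ((U ⊔ V : Subgroup G) : Set G) ⊆ (K : Set G) * H :=
      coe_sup_subset_of_mul_subset
        (one_mul (1 : G) ▸ Set.mul_mem_mul (one_mem K) (one_mem H))
        (coe_mul_mul_subset_of_inf_le hAH hHU le_sup_left)
        (coe_mul_mul_subset_of_inf_le hAH hHV le_sup_right)
    have hHA : H ⊓ A ≤ K := (inf_le_inf_right A hHU).trans le_sup_left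
    intro x ⟨hxUV, hxA⟩
    have hx : x ∈ (K : Set G) * ↑(H ⊓ A) := by
      rw [mul_inf_assoc K H A hKA]; exact ⟨hUV hxUV, hxA⟩
    rw [← SetLike.mem_coe, ← coe_mul_coe K]
    exact Set.mul_subset_mul_left hHA hx
  · exact sup_le (inf_le_inf_right A le_sup_left) (inf_le_inf_right A le_sup_right)
end

section
/- Let A be a group and I, J ≤ A subgroups, and H a subgroup of a group G containing A, such that IH = HI and JH = HJ. Then (IH) ∩ (JH) = (I ∩ J)H, and consequently (I ∩ J)H = H(I ∩ J). -/
open scoped Pointwise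

/-- If `I, J` are subgroups between `H ⊓ A` and `A` with `IH = HI` and `JH = HJ`,
then `(IH) ∩ (JH) = (I ∩ J)H`, and consequently `(I ∩ J)H = H(I ∩ J)`. -/
theorem stmt_4 {G : Type*} [Group G] (H A I J : Subgroup G)
    (hAH : (A : Set G) * (H : Set G) = Set.univ)
    (hI₁ : H ⊓ A ≤ I) (hI₂ : I ≤ A) (hJ₁ : H ⊓ A ≤ J) (hJ₂ : J ≤ A)
    (hIH : (I : Set G) * (H : Set G) = (H : Set G) * (I : Set G))
    (hJH : (J : Set G) * (H : Set G) = (H : Set G) * (J : Set G)) :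
    ((I : Set G) * (H : Set G)) ∩ ((J : Set G) * (H : Set G))
      = ((I ⊓ J : Subgroup G) : Set G) * (H : Set G) ∧
    ((I ⊓ J : Subgroup G) : Set G) * (H : Set G)
      = (H : Set G) * ((I ⊓ J : Subgroup G) : Set G) := by
  have key : ((I : Set G) * (H : Set G)) ∩ ((J : Set G) * (H : Set G))
      = ((I ⊓ J : Subgroup G) : Set G) * (H : Set G) := by
    ext x
    constructor
    · rintro ⟨⟨i, hi, h, hh, rfl⟩, j, hj, h', hh', heq⟩
      have hi : i ∈ I := hi
      have hh : h ∈ H := hh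
      have hj : j ∈ J := hj
      have hh' : h' ∈ H := hh'
      have heq : j * h' = i * h := heq
      have e : j⁻¹ * i = h' * h⁻¹ := by
        have : j * (j⁻¹ * i) = j * (h' * h⁻¹) := by
          rw [← mul_assoc, ← mul_assoc, heq]; group
        exact mul_left_cancel this
      have hmem : j⁻¹ * i ∈ H ⊓ A := by
        rw [Subgroup.mem_inf]
        refine ⟨?_, mul_mem (inv_mem (hJ₂ hj)) (hI₂ hi)⟩
        rw [e]; exact mul_mem hh' (inv_mem hh)
      have hiJ : i ∈ J := by
        have := mul_mem hj (hJ₁ hmem)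
        simpa [← mul_assoc] using this
      exact ⟨i, ⟨hi, hiJ⟩, h, hh, rfl⟩
    · rintro ⟨k, hk, h, hh, rfl⟩
      exact ⟨⟨k, hk.1, h, hh, rfl⟩, k, hk.2, h, hh, rfl⟩
  have key2 : ((H : Set G) * (I : Set G)) ∩ ((H : Set G) * (J : Set G))
      = (H : Set G) * ((I ⊓ J : Subgroup G) : Set G) := by
    ext x
    constructor
    · rintro ⟨⟨h, hh, i, hi, rfl⟩, h', hh', j, hj, heq⟩
      have hi : i ∈ I := hi
      have hh : h ∈ H := hh
      have hj : j ∈ J := hj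
      have hh' : h' ∈ H := hh'
      have heq : h' * j = h * i := heq
      have e : i * j⁻¹ = h⁻¹ * h' := by
        have : (i * j⁻¹) * j = (h⁻¹ * h') * j := by
          rw [mul_assoc, mul_assoc, heq]; group
        exact mul_right_cancel this
      have hmem : i * j⁻¹ ∈ H ⊓ A := by
        rw [Subgroup.mem_inf]
        refine ⟨?_, mul_mem (hI₂ hi) (inv_mem (hJ₂ hj))⟩
        rw [e]; exact mul_mem (inv_mem hh) hh'
      have hiJ : i ∈ J := by
        have := mul_mem (hJ₁ hmem) hj
        simpa [mul_assoc] using this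
      exact ⟨h, hh, i, ⟨hi, hiJ⟩, rfl⟩
    · rintro ⟨h, hh, k, hk, rfl⟩
      exact ⟨⟨h, hh, k, hk.1, rfl⟩, h, hh, k, hk.2, rfl⟩
  refine ⟨key, ?_⟩
  rw [← key, hIH, hJH, key2]
end

section
/- Every maximal proper subgroup of a quasi-Hamiltonian group is normal. That is, if G is a group in which IJ = JI for all subgroups I, J, and U is a maximal proper subgroup of G, then U is normal in G. -/
open scoped Pointwise

/-- The set product of two permuting subgroups is a subgroup. -/
def permSubgroup {G : Type*} [Group G] (U C : Subgroup G)
    (h : (U : Set G) * (C : Set G) = (C : Set G) * (U : Set G)) : Subgroup G where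
  carrier := (U : Set G) * (C : Set G)
  one_mem' := ⟨1, U.one_mem, 1, C.one_mem, mul_one 1⟩
  mul_mem' := by
    rintro x y ⟨u₁, hu₁, c₁, hc₁, rfl⟩ ⟨u₂, hu₂, c₂, hc₂, rfl⟩
    have hcu : c₁ * u₂ ∈ (C : Set G) * (U : Set G) := ⟨c₁, hc₁, u₂, hu₂, rfl⟩
    rw [← h] at hcu
    obtain ⟨u₃, hu₃, c₃, hc₃, hm⟩ := hcu
    refine ⟨u₁ * u₃, U.mul_mem hu₁ hu₃, c₃ * c₂, C.mul_mem hc₃ hc₂, ?_⟩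
    show (u₁ * u₃) * (c₃ * c₂) = u₁ * c₁ * (u₂ * c₂)
    have hm' : u₃ * c₃ = c₁ * u₂ := hm
    rw [show (u₁ * u₃) * (c₃ * c₂) = u₁ * ((u₃ * c₃) * c₂) by group, hm']
    group
  inv_mem' := by
    rintro x ⟨u, hu, c, hc, rfl⟩
    have hcu : c⁻¹ * u⁻¹ ∈ (C : Set G) * (U : Set G) :=
      ⟨c⁻¹, C.inv_mem hc, u⁻¹, U.inv_mem hu, rfl⟩
    rw [← h] at hcu
    simpa [mul_inv_rev] using hcu

/-- Every maximal proper subgroup of a quasi-Hamiltonian group is normal. -/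
theorem stmt_5 {G : Type*} [Group G]
    (hQH : ∀ I J : Subgroup G, (I : Set G) * (J : Set G) = (J : Set G) * (I : Set G))
    (U : Subgroup G) (hU : IsCoatom U) :
    U.Normal := by
  constructor
  intro u hu g
  -- It suffices to show g⁻¹ * u * g ∈ U for all g; then apply with g⁻¹.
  have key : ∀ g : G, g⁻¹ * u * g ∈ U := by
    intro g
    by_cases hg : g ∈ U
    · exact U.mul_mem (U.mul_mem (U.inv_mem hg) hu) hg
    by_contra hcU
    set c := g⁻¹ * u * g with hc
    set C := Subgroup.zpowers c with hC
    set K := permSubgroup U C (hQH U C) with hK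
    have hUK : U ≤ K := fun x hx => ⟨x, hx, 1, C.one_mem, mul_one x⟩
    have hCK : C ≤ K := fun x hx => ⟨1, U.one_mem, x, hx, one_mul x⟩
    have hlt : U < K := lt_of_le_of_ne hUK (by
      intro hEq
      exact hcU (hEq ▸ hCK (Subgroup.mem_zpowers c)))
    have hKtop : K = ⊤ := hU.2 K hlt
    have hgK : g ∈ K := hKtop ▸ Subgroup.mem_top g
    obtain ⟨u₁, hu₁, x, hx, hgeq⟩ := hgK
    obtain ⟨k, hxk⟩ := hx
    have hu₁' : u₁ ∈ U := hu₁
    have hck : c ^ k = g⁻¹ * u ^ k * g := by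
      rw [hc, show g⁻¹ * u * g = g⁻¹ * u * g⁻¹⁻¹ by rw [inv_inv], conj_zpow, inv_inv]
    have hgeq' : u₁ * (g⁻¹ * u ^ k * g) = g := by
      have h0 : u₁ * c ^ k = g := by rw [show c ^ k = x from hxk]; exact hgeq
      rwa [hck] at h0
    have h3 : u₁ * (g⁻¹ * u ^ k) = 1 := by
      apply mul_right_cancel (b := g)
      rw [one_mul]
      conv_rhs => rw [← hgeq']
      group
    have h5 : g⁻¹ * u ^ k = u₁⁻¹ := eq_inv_of_mul_eq_one_right h3
    have h4 : g⁻¹ = u₁⁻¹ * (u ^ k)⁻¹ := by rw [← h5]; group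
    exact hg (by
      rw [← inv_inv g, h4]
      exact U.inv_mem (U.mul_mem (U.inv_mem hu₁') (U.inv_mem (U.zpow_mem hu k))))
  have := key g⁻¹
  simpa using this
end

section
/- Let A be a finite group, B ≤ A, and S a set of subgroups between B and A containing A and B and closed under pairwise products IJ (which are assumed to be subgroups lying in S) and intersections. Then any two maximal decreasing chains in S from A to B have the same length. -/
open scoped Pointwise

/-!
A family of subgroups closed under intersections and under products `IJ` that are subgroups is a
sublattice of the subgroup lattice in which `I ⊔ J = IJ`. Dedekind's law
`I(J ∩ K) = IJ ∩ K` for `I ≤ K` makes this sublattice modular, and in a modular lattice any two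
maximal chains with the same ends have the same length by the Jordan–Hölder theorem.
-/

namespace Subgroup

variable {G : Type*} [Group G]

theorem sup_eq_of_coe_eq_mul {H N K : Subgroup G} (h : (K : Set G) = H * N) : H ⊔ N = K := by
  rw [sup_eq_closure_mul, ← h, closure_eq]

def mulInfSublattice (S : Set (Subgroup G))
    (hmul : ∀ I ∈ S, ∀ J ∈ S, ∃ K ∈ S, (K : Set G) = (I : Set G) * (J : Set G))
    (hinf : ∀ I ∈ S, ∀ J ∈ S, I ⊓ J ∈ S) : Sublattice (Subgroup G) where
  carrier := S
  supClosed' I hI J hJ := by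
    obtain ⟨K, hK, hKIJ⟩ := hmul I hI J hJ
    rwa [sup_eq_of_coe_eq_mul hKIJ]
  infClosed' I hI J hJ := hinf I hI J hJ

theorem isModularLattice_of_coe_sup_eq_mul (L : Sublattice (Subgroup G))
    (h : ∀ H ∈ L, ∀ K ∈ L, ((H ⊔ K : Subgroup G) : Set G) = H * K) : IsModularLattice L where
  sup_inf_le_assoc_of_le {x} y z hxz := by
    change ((x : Subgroup G) ⊔ y) ⊓ (z : Subgroup G) ≤ (x : Subgroup G) ⊔ ((y : Subgroup G) ⊓ z)
    rw [← SetLike.coe_subset_coe, coe_inf, h x x.2 y y.2, ← mul_inf_assoc _ _ _ hxz]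
    exact mul_subset (SetLike.coe_subset_coe.2 le_sup_left) (SetLike.coe_subset_coe.2 le_sup_right)

end Subgroup

theorem Subtype.mk_covBy_mk_of_forall_not_lt {α : Type*} [Preorder α] {S : Set α} {a b : α}
    (ha : a ∈ S) (hb : b ∈ S) (hab : a < b) (h : ∀ c ∈ S, ¬(a < c ∧ c < b)) :
    (⟨a, ha⟩ : S) ⋖ ⟨b, hb⟩ :=
  ⟨hab, fun c hac hcb => h c c.2 ⟨hac, hcb⟩⟩

theorem IsModularLattice.length_eq_of_covBy {X : Type*} [Lattice X] [IsModularLattice X]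
    {n m : ℕ} (v : Fin (n + 1) → X) (w : Fin (m + 1) → X)
    (hv : ∀ i : Fin n, v i.castSucc ⋖ v i.succ) (hw : ∀ i : Fin m, w i.castSucc ⋖ w i.succ)
    (h₀ : v 0 = w 0) (hlast : v (Fin.last n) = w (Fin.last m)) : n = m :=
  CompositionSeries.Equivalent.length_eq (s₁ := ⟨n, v, hv⟩) (s₂ := ⟨m, w, hw⟩)
    (CompositionSeries.jordan_holder _ _ h₀ hlast)

theorem stmt_6_general {A : Type*} [Group A] (B : Subgroup A)
    (S : Set (Subgroup A))
    (hprod : ∀ I ∈ S, ∀ J ∈ S, ∃ K ∈ S, (K : Set A) = (I : Set A) * (J : Set A))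
    (hinf : ∀ I ∈ S, ∀ J ∈ S, I ⊓ J ∈ S)
    (n m : ℕ) (V : Fin (n + 1) → Subgroup A) (W : Fin (m + 1) → Subgroup A)
    (hV : StrictMono V) (hW : StrictMono W)
    (hV0 : V 0 = B) (hVn : V (Fin.last n) = ⊤)
    (hW0 : W 0 = B) (hWm : W (Fin.last m) = ⊤)
    (hVS : ∀ i, V i ∈ S) (hWS : ∀ i, W i ∈ S)
    (hVmax : ∀ i : Fin n, ∀ X ∈ S, ¬(V i.castSucc < X ∧ X < V i.succ))
    (hWmax : ∀ i : Fin m, ∀ X ∈ S, ¬(W i.castSucc < X ∧ X < W i.succ)) :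
    n = m := by
  let L := Subgroup.mulInfSublattice S hprod hinf
  have hsup : ∀ I ∈ L, ∀ J ∈ L, ((I ⊔ J : Subgroup A) : Set A) = I * J := fun I hI J hJ => by
    obtain ⟨K, -, hK⟩ := hprod I hI J hJ
    rw [Subgroup.sup_eq_of_coe_eq_mul hK, hK]
  have := Subgroup.isModularLattice_of_coe_sup_eq_mul L hsup
  exact IsModularLattice.length_eq_of_covBy (X := L)
    (fun i => ⟨V i, hVS i⟩) (fun i => ⟨W i, hWS i⟩)
    (fun i => Subtype.mk_covBy_mk_of_forall_not_lt _ _ (hV i.castSucc_lt_succ) (hVmax i))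
    (fun i => Subtype.mk_covBy_mk_of_forall_not_lt _ _ (hW i.castSucc_lt_succ) (hWmax i))
    (Subtype.ext (hV0.trans hW0.symm)) (Subtype.ext (hVn.trans hWm.symm))

/-- Any two maximal chains in a product- and intersection-closed family `S` of
subgroups between `B` and `A` have the same length. -/
theorem stmt_6 {A : Type*} [Group A] [Finite A] (B : Subgroup A)
    (S : Set (Subgroup A)) (hBS : B ∈ S) (htopS : ⊤ ∈ S)
    (hBle : ∀ U ∈ S, B ≤ U)
    (hprod : ∀ I ∈ S, ∀ J ∈ S, ∃ K ∈ S, (K : Set A) = (I : Set A) * (J : Set A))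
    (hinf : ∀ I ∈ S, ∀ J ∈ S, I ⊓ J ∈ S)
    (n m : ℕ) (V : Fin (n + 1) → Subgroup A) (W : Fin (m + 1) → Subgroup A)
    (hV : StrictMono V) (hW : StrictMono W)
    (hV0 : V 0 = B) (hVn : V (Fin.last n) = ⊤)
    (hW0 : W 0 = B) (hWm : W (Fin.last m) = ⊤)
    (hVS : ∀ i, V i ∈ S) (hWS : ∀ i, W i ∈ S)
    (hVmax : ∀ i : Fin n, ∀ X ∈ S, ¬(V i.castSucc < X ∧ X < V i.succ))
    (hWmax : ∀ i : Fin m, ∀ X ∈ S, ¬(W i.castSucc < X ∧ X < W i.succ)) :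
    n = m :=
  stmt_6_general B S hprod hinf n m V W hV hW hV0 hVn hW0 hWm hVS hWS hVmax hWmax
end

section
/- Let A be a finite group, B ≤ A, and S a set of subgroups between B and A containing A and B and closed under products and intersections (products assumed to be subgroups in S). Then any two maximal decreasing chains in S from A to B have the same multiset of indices between consecutive terms. -/
open scoped Pointwise

/-!
The family `S` is a sublattice of `Subgroup A` (the product `I * J`, being a subgroup, is `I ⊔ J`)
whose members pairwise permute. For permuting subgroups the coset map `K → A ⧸ H` has image
`(H ⊔ K) / H`, so `[H ⊔ K : H] = [K : H ⊓ K]`. This index identity makes `S` lower semimodular,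
hence a Jordan–Hölder lattice in which the second-isomorphism relation preserves indices, and the
Jordan–Hölder theorem matches the steps of any two maximal chains index by index.
-/

namespace Subgroup

variable {G : Type*} [Group G]

theorem eq_sup_of_coe_eq_mul {H K M : Subgroup G} (h : (M : Set G) = H * K) : M = H ⊔ K := by
  refine le_antisymm ?_ (sup_le ?_ ?_) <;> rw [← SetLike.coe_subset_coe, h]
  · exact mul_subset (SetLike.coe_subset_coe.2 le_sup_left) (SetLike.coe_subset_coe.2 le_sup_right)
  · exact Set.subset_mul_left _ K.one_mem
  · exact Set.subset_mul_right _ H.one_mem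

theorem relIndex_eq_ncard_image (H K : Subgroup G) :
    H.relIndex K = ((K : Set G).image ((↑) : G → G ⧸ H)).ncard := by
  have hsmul (k : K) : k • ((1 : G) : G ⧸ H) = ((k : G) : G ⧸ H) := by
    change (k : G) • ((1 : G) : G ⧸ H) = _
    rw [MulAction.Quotient.smul_coe, smul_eq_mul, mul_one]
  have hstab : MulAction.stabilizer K ((1 : G) : G ⧸ H) = H.subgroupOf K := by
    ext k
    simp [MulAction.mem_stabilizer_iff, hsmul, QuotientGroup.eq, mem_subgroupOf]
  have horbit : MulAction.orbit K ((1 : G) : G ⧸ H) = (K : Set G).image ((↑) : G → G ⧸ H) := by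
    ext x
    simp only [MulAction.mem_orbit_iff, hsmul, Set.mem_image, SetLike.mem_coe, Subtype.exists,
      exists_prop]
  rw [relIndex, ← hstab, MulAction.index_stabilizer, horbit]

theorem image_mk_mul_eq_image_mk (H : Subgroup G) (s : Set G) :
    (s * H).image ((↑) : G → G ⧸ H) = s.image ((↑) : G → G ⧸ H) := by
  refine le_antisymm ?_ (Set.image_mono (Set.subset_mul_left s H.one_mem))
  rintro _ ⟨_, ⟨k, hk, h, hh, rfl⟩, rfl⟩
  exact ⟨k, hk, (QuotientGroup.mk_mul_of_mem k hh).symm⟩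

theorem eq_of_le_of_relIndex_eq {D M H : Subgroup G} (hDM : D ≤ M) (hMH : M ≤ H)
    (hH : D.relIndex H ≠ 0) (h : D.relIndex M = D.relIndex H) : M = H := by
  rw [← relIndex_mul_relIndex D M H hDM hMH] at h hH
  exact le_antisymm hMH (relIndex_eq_one.1 ((mul_eq_left₀ (left_ne_zero_of_mul hH)).1 h.symm))

theorem relIndex_sup_eq_relIndex_inf {H K : Subgroup G}
    (h : ((K ⊔ H : Subgroup G) : Set G) = K * H) :
    H.relIndex (H ⊔ K) = (H ⊓ K).relIndex K := by
  rw [inf_relIndex_right, relIndex_eq_ncard_image, relIndex_eq_ncard_image, sup_comm, h,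
    image_mk_mul_eq_image_mk]

end Subgroup

section PermutableSublattice

variable {G : Type*} [Group G]

class Sublattice.IsPermutable (L : Sublattice (Subgroup G)) : Prop where
  coe_sup_eq_mul : ∀ H ∈ L, ∀ K ∈ L, ((H ⊔ K : Subgroup G) : Set G) = H * K

def Sublattice.ofMulClosed (S : Set (Subgroup G))
    (hmul : ∀ H ∈ S, ∀ K ∈ S, ∃ M ∈ S, (M : Set G) = H * K)
    (hinf : ∀ H ∈ S, ∀ K ∈ S, H ⊓ K ∈ S) : Sublattice (Subgroup G) where
  carrier := S
  supClosed' H hH K hK := by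
    obtain ⟨M, hM, hMHK⟩ := hmul H hH K hK
    rwa [← Subgroup.eq_sup_of_coe_eq_mul hMHK]
  infClosed' H hH K hK := hinf H hH K hK

instance Sublattice.ofMulClosed.isPermutable (S : Set (Subgroup G))
    (hmul : ∀ H ∈ S, ∀ K ∈ S, ∃ M ∈ S, (M : Set G) = H * K)
    (hinf : ∀ H ∈ S, ∀ K ∈ S, H ⊓ K ∈ S) : (Sublattice.ofMulClosed S hmul hinf).IsPermutable where
  coe_sup_eq_mul H hH K hK := by
    obtain ⟨M, -, hMHK⟩ := hmul H hH K hK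
    rw [← Subgroup.eq_sup_of_coe_eq_mul hMHK, hMHK]

namespace Sublattice.IsPermutable

variable {L : Sublattice (Subgroup G)} [L.IsPermutable]

theorem relIndex_sup_eq_relIndex_inf (H K : L) :
    (H : Subgroup G).relIndex (H ⊔ K : L) = ((H ⊓ K : L) : Subgroup G).relIndex K :=
  Subgroup.relIndex_sup_eq_relIndex_inf (coe_sup_eq_mul _ K.2 _ H.2)

instance [Finite G] : IsLowerModularLattice L where
  inf_covBy_of_covBy_sup {a b} hab := by
    refine ⟨inf_lt_right.2 fun hba => hab.lt.ne (sup_eq_left.2 hba).symm, fun M hM hMb => ?_⟩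
    have hsup : a ⊔ M = a ⊔ b :=
      (hab.eq_or_eq le_sup_left (sup_le_sup_left hMb.le a)).resolve_left
        fun h => hM.not_ge (le_inf (sup_eq_left.1 h) hMb.le)
    have hinf : a ⊓ M = a ⊓ b :=
      le_antisymm (inf_le_inf_left a hMb.le) (le_inf inf_le_left hM.le)
    have hindex : ((a ⊓ b : L) : Subgroup G).relIndex M = ((a ⊓ b : L) : Subgroup G).relIndex b :=
      calc ((a ⊓ b : L) : Subgroup G).relIndex M
          = ((a ⊓ M : L) : Subgroup G).relIndex M := by rw [hinf]
        _ = (a : Subgroup G).relIndex (a ⊔ M : L) := (relIndex_sup_eq_relIndex_inf a M).symm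
        _ = (a : Subgroup G).relIndex (a ⊔ b : L) := by rw [hsup]
        _ = ((a ⊓ b : L) : Subgroup G).relIndex b := relIndex_sup_eq_relIndex_inf a b
    exact hMb.ne (Subtype.ext <| Subgroup.eq_of_le_of_relIndex_eq hM.le hMb.le
      Subgroup.FiniteIndex.index_ne_zero hindex)

instance [Finite G] : JordanHolderLattice L where
  IsMaximal := (· ⋖ ·)
  lt_of_isMaximal := CovBy.lt
  sup_eq_of_isMaximal hxz hyz := hxz.wcovBy.sup_eq hyz.wcovBy
  isMaximal_inf_left_of_isMaximal_sup _ hyz := inf_covBy_of_covBy_sup_right hyz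

theorem relIndex_eq_of_iso [Finite G] {p q : L × L} (h : JordanHolderLattice.Iso p q) :
    (p.1 : Subgroup G).relIndex p.2 = (q.1 : Subgroup G).relIndex q.2 :=
  JordanHolderLattice.Iso.rel (fun p q : L × L => (p.1 : Subgroup G).relIndex p.2 =
      (q.1 : Subgroup G).relIndex q.2) rfl Eq.symm Eq.trans
    (fun {H K} _ => relIndex_sup_eq_relIndex_inf H K) h

def compositionSeriesOfMaximalChain [Finite G] {n : ℕ} (V : Fin (n + 1) → Subgroup G)
    (hVL : ∀ i, V i ∈ L) (hV : StrictMono V)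
    (hmax : ∀ i : Fin n, ∀ X ∈ L, ¬(V i.castSucc < X ∧ X < V i.succ)) : CompositionSeries L where
  length := n
  toFun i := ⟨V i, hVL i⟩
  step i := show (⟨_, hVL _⟩ : L) ⋖ ⟨_, hVL _⟩ from
    ⟨hV i.castSucc_lt_succ, fun X h₁ h₂ => hmax i X X.2 ⟨h₁, h₂⟩⟩

end Sublattice.IsPermutable

end PermutableSublattice

theorem Multiset.coe_ofFn_eq_of_equiv {α : Type*} {n m : ℕ} {f : Fin n → α} {g : Fin m → α}
    (e : Fin n ≃ Fin m) (h : ∀ i, f i = g (e i)) :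
    (List.ofFn f : Multiset α) = List.ofFn g := by
  rw [← Fin.univ_val_map, ← Fin.univ_val_map, ← Multiset.map_univ_val_equiv e, Multiset.map_map]
  exact congrArg (Multiset.map · _) (funext h)

theorem stmt_7_general {A : Type*} [Group A] [Finite A] (B : Subgroup A)
    (S : Set (Subgroup A))
    (hprod : ∀ I ∈ S, ∀ J ∈ S, ∃ K ∈ S, (K : Set A) = (I : Set A) * (J : Set A))
    (hinf : ∀ I ∈ S, ∀ J ∈ S, I ⊓ J ∈ S)
    (n m : ℕ) (V : Fin (n + 1) → Subgroup A) (W : Fin (m + 1) → Subgroup A)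
    (hV : StrictMono V) (hW : StrictMono W)
    (hV0 : V 0 = B) (hVn : V (Fin.last n) = ⊤)
    (hW0 : W 0 = B) (hWm : W (Fin.last m) = ⊤)
    (hVS : ∀ i, V i ∈ S) (hWS : ∀ i, W i ∈ S)
    (hVmax : ∀ i : Fin n, ∀ X ∈ S, ¬(V i.castSucc < X ∧ X < V i.succ))
    (hWmax : ∀ i : Fin m, ∀ X ∈ S, ¬(W i.castSucc < X ∧ X < W i.succ)) :
    (↑(List.ofFn fun i : Fin n => (V i.castSucc).relIndex (V i.succ)) : Multiset ℕ)
      = ↑(List.ofFn fun i : Fin m => (W i.castSucc).relIndex (W i.succ)) := by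
  let L := Sublattice.ofMulClosed S hprod hinf
  obtain ⟨e, he⟩ := CompositionSeries.jordan_holder
    (Sublattice.IsPermutable.compositionSeriesOfMaximalChain (L := L) V hVS hV hVmax)
    (Sublattice.IsPermutable.compositionSeriesOfMaximalChain (L := L) W hWS hW hWmax)
    (Subtype.ext (hV0.trans hW0.symm)) (Subtype.ext (hVn.trans hWm.symm))
  have hindex := fun i => Sublattice.IsPermutable.relIndex_eq_of_iso (he i)
  exact Multiset.coe_ofFn_eq_of_equiv e hindex

/-- Any two maximal chains in a product- and intersection-closed family `S` of
subgroups between `B` and `A` have the same multiset of indices between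
consecutive terms. -/
theorem stmt_7 {A : Type*} [Group A] [Finite A] (B : Subgroup A)
    (S : Set (Subgroup A)) (hBS : B ∈ S) (htopS : ⊤ ∈ S)
    (hBle : ∀ U ∈ S, B ≤ U)
    (hprod : ∀ I ∈ S, ∀ J ∈ S, ∃ K ∈ S, (K : Set A) = (I : Set A) * (J : Set A))
    (hinf : ∀ I ∈ S, ∀ J ∈ S, I ⊓ J ∈ S)
    (n m : ℕ) (V : Fin (n + 1) → Subgroup A) (W : Fin (m + 1) → Subgroup A)
    (hV : StrictMono V) (hW : StrictMono W)
    (hV0 : V 0 = B) (hVn : V (Fin.last n) = ⊤)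
    (hW0 : W 0 = B) (hWm : W (Fin.last m) = ⊤)
    (hVS : ∀ i, V i ∈ S) (hWS : ∀ i, W i ∈ S)
    (hVmax : ∀ i : Fin n, ∀ X ∈ S, ¬(V i.castSucc < X ∧ X < V i.succ))
    (hWmax : ∀ i : Fin m, ∀ X ∈ S, ¬(W i.castSucc < X ∧ X < W i.succ)) :
    (↑(List.ofFn fun i : Fin n => (V i.castSucc).relIndex (V i.succ)) : Multiset ℕ)
      = ↑(List.ofFn fun i : Fin m => (W i.castSucc).relIndex (W i.succ)) :=
  stmt_7_general B S hprod hinf n m V W hV hW hV0 hVn hW0 hWm hVS hWS hVmax hWmax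
end

section
/- Let G be a group acting faithfully and transitively on a set, H the stabilizer of a point, and A a transitive abelian subgroup. If G > U > H and G > V > H are two distinct maximal chains of subgroups (i.e., U and V are both maximal in G and have H maximal in them, and U ≠ V), then UV = G and U ∩ V = H. -/
open scoped Pointwise

/-- For a faithful transitive action with point stabilizer `H` and a transitive
abelian subgroup `A`, distinct maximal chains `G > U > H` and `G > V > H`
satisfy `UV = G` and `U ⊓ V = H`. -/
theorem stmt_8 {G : Type*} [Group G] {X : Type*} [Finite X] [MulAction G X]
    [MulAction.IsPretransitive G X] [FaithfulSMul G X] (x : X)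
    (A U V : Subgroup G)
    (hAH : (A : Set G) * (MulAction.stabilizer G x : Set G) = Set.univ)
    (hab : ∀ a ∈ A, ∀ b ∈ A, a * b = b * a)
    (hHU : MulAction.stabilizer G x < U) (hUtop : U < ⊤)
    (hHV : MulAction.stabilizer G x < V) (hVtop : V < ⊤)
    (hUmax : ∀ W : Subgroup G, ¬(U < W ∧ W < ⊤))
    (hHUmax : ∀ W : Subgroup G, ¬(MulAction.stabilizer G x < W ∧ W < U))
    (hVmax : ∀ W : Subgroup G, ¬(V < W ∧ W < ⊤))
    (hHVmax : ∀ W : Subgroup G, ¬(MulAction.stabilizer G x < W ∧ W < V))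
    (hUV : U ≠ V) :
    (U : Set G) * (V : Set G) = Set.univ ∧ U ⊓ V = MulAction.stabilizer G x := by
  set H := MulAction.stabilizer G x with hHdef
  have hHleU : H ≤ U := le_of_lt hHU
  have hHleV : H ≤ V := le_of_lt hHV
  -- decomposition: every element of a subgroup W ⊇ H is a·h with a ∈ A ∩ W, h ∈ H
  have decomp : ∀ (W : Subgroup G), H ≤ W → ∀ w ∈ W,
      ∃ a ∈ A, a ∈ W ∧ ∃ h ∈ H, w = a * h := by
    intro W hHW w hw
    have : w ∈ ((A : Set G) * (H : Set G)) := by rw [hAH]; trivial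
    obtain ⟨a, ha, h, hh, rfl⟩ := this
    exact ⟨a, ha, by
      have : (a * h) * h⁻¹ ∈ W := W.mul_mem hw (hHW (H.inv_mem hh))
      simpa using this, h, hh, rfl⟩
  -- U ⊓ V = H
  have hinf : U ⊓ V = H := by
    have hle : H ≤ U ⊓ V := le_inf hHleU hHleV
    have hltU : U ⊓ V < U := by
      rcases lt_or_eq_of_le (inf_le_left : U ⊓ V ≤ U) with h | h
      · exact h
      · exfalso
        have hUleV : U ≤ V := by rw [← h]; exact inf_le_right
        have : U < V := lt_of_le_of_ne hUleV hUV
        exact hHVmax U ⟨hHU, this⟩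
    rcases lt_or_eq_of_le hle with h | h
    · exact absurd ⟨h, hltU⟩ (hHUmax (U ⊓ V))
    · exact h.symm
  -- U ⊔ V = ⊤
  have hsup : U ⊔ V = ⊤ := by
    have hltU : U < U ⊔ V := by
      rcases lt_or_eq_of_le (le_sup_left : U ≤ U ⊔ V) with h | h
      · exact h
      · exfalso
        have hVleU : V ≤ U := by
          have := le_sup_right (a := U) (b := V); rw [← h] at this; exact this
        have : V < U := lt_of_le_of_ne hVleU (Ne.symm hUV)
        exact hHUmax V ⟨hHV, this⟩
    rcases lt_or_eq_of_le (le_top : U ⊔ V ≤ ⊤) with h | h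
    · exact absurd ⟨hltU, h⟩ (hUmax (U ⊔ V))
    · exact h
  -- key swap: v * u ∈ U * V for u ∈ U, v ∈ V
  have swap : ∀ v ∈ V, ∀ u ∈ U, v * u ∈ (U : Set G) * (V : Set G) := by
    intro v hv u hu
    obtain ⟨a, haA, haU, h, hh, rfl⟩ := decomp U hHleU u hu
    obtain ⟨a', ha'A, ha'V, h', hh', rfl⟩ := decomp V hHleV v hv
    -- h' * a ∈ U; decompose it
    have hmem : h' * a ∈ U := U.mul_mem (hHleU hh') haU
    obtain ⟨a'', ha''A, ha''U, h'', hh'', heq⟩ := decomp U hHleU _ hmem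
    -- (a' h')(a h) = a' (h' a) h = a' a'' h'' h = a'' (a' h'' h)
    refine ⟨a'', ha''U, a' * (h'' * h), V.mul_mem ha'V (V.mul_mem (hHleV hh'') (hHleV hh)), ?_⟩
    have comm : a' * a'' = a'' * a' := hab a' ha'A a'' ha''A
    symm
    calc a' * h' * (a * h) = a' * (h' * a) * h := by group
      _ = a' * (a'' * h'') * h := by rw [heq]
      _ = (a' * a'') * (h'' * h) := by group
      _ = (a'' * a') * (h'' * h) := by rw [comm]
      _ = a'' * (a' * (h'' * h)) := by group
  -- U * V = univ
  have hprod : (U : Set G) * (V : Set G) = Set.univ := by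
    apply Set.eq_univ_of_univ_subset
    intro g hgu
    clear hgu
    have hg : g ∈ U ⊔ V := by rw [hsup]; trivial
    rw [Subgroup.sup_eq_closure_mul] at hg
    induction hg using Subgroup.closure_induction'' with
    | one => exact ⟨1, U.one_mem, 1, V.one_mem, mul_one 1⟩
    | mem y hy => exact hy
    | inv_mem y hy =>
        obtain ⟨u, hu, v, hv, rfl⟩ := hy
        simpa [mul_inv_rev] using swap _ (V.inv_mem hv) _ (U.inv_mem hu)
    | mul y z hy hz ihy ihz =>
        obtain ⟨u, hu, v, hv, rfl⟩ := ihy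
        obtain ⟨u', hu', v', hv', rfl⟩ := ihz
        obtain ⟨u'', hu'', v'', hv'', heq⟩ := swap _ hv _ hu'
        symm at heq
        refine ⟨u * u'', U.mul_mem hu hu'', v'' * v', V.mul_mem hv'' hv', ?_⟩
        symm
        calc u * v * (u' * v') = u * (v * u') * v' := by group
          _ = u * (u'' * v'') * v' := by rw [heq]
          _ = u * u'' * (v'' * v') := by group
  exact ⟨hprod, hinf⟩
end

section
/- Let G be a finite group acting transitively on a set with point stabilizer H, and let A be a transitive quasi-Hamiltonian subgroup of G. If G > U > H and G > V > H are distinct maximal chains of subgroups, then writing N = core_G(U) and C = core_V(H), either the coset action of G on G/U is isomorphic (as a permutation action) to the action of V on V/H, or N = C = core_G(H). -/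
open scoped Pointwise

/-- The core of `H` in `V`: the largest normal subgroup of `V` contained in `H`,
viewed as a subgroup of `G`. -/
def coreIn {G : Type*} [Group G] (V H : Subgroup G) : Subgroup G :=
  ((H.subgroupOf V).normalCore).map V.subtype

/-- For a finite transitive action with point stabilizer `H` and a transitive
quasi-Hamiltonian subgroup `A`, if `G > U > H` and `G > V > H` are distinct
maximal chains, then with `N = core_G(U)` and `C = core_V(H)` either the coset
action of `G` on `G/U` is isomorphic as a permutation action to the action of
`V` on `V/H`, or `N = C = core_G(H)`. -/
theorem stmt_10 {G : Type*} [Group G] [Finite G] {X : Type*} [MulAction G X]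
    [MulAction.IsPretransitive G X] (x : X)
    (A U V : Subgroup G)
    (hAH : (A : Set G) * (MulAction.stabilizer G x : Set G) = Set.univ)
    (hQH : ∀ I J : Subgroup G, I ≤ A → J ≤ A →
      (I : Set G) * (J : Set G) = (J : Set G) * (I : Set G))
    (hHU : MulAction.stabilizer G x < U) (hUtop : U < ⊤)
    (hHV : MulAction.stabilizer G x < V) (hVtop : V < ⊤)
    (hUmax : ∀ W : Subgroup G, ¬(U < W ∧ W < ⊤))
    (hHUmax : ∀ W : Subgroup G, ¬(MulAction.stabilizer G x < W ∧ W < U))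
    (hVmax : ∀ W : Subgroup G, ¬(V < W ∧ W < ⊤))
    (hHVmax : ∀ W : Subgroup G, ¬(MulAction.stabilizer G x < W ∧ W < V))
    (hUV : U ≠ V) :
    (∃ e : (G ⧸ U) ≃ (V ⧸ (MulAction.stabilizer G x).subgroupOf V),
        ∀ σ : Equiv.Perm (G ⧸ U),
          σ ∈ (MulAction.toPermHom G (G ⧸ U)).range ↔
            e.permCongr σ ∈
              (MulAction.toPermHom V
                (V ⧸ (MulAction.stabilizer G x).subgroupOf V)).range) ∨
      (U.normalCore = coreIn V (MulAction.stabilizer G x) ∧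
        coreIn V (MulAction.stabilizer G x) = (MulAction.stabilizer G x).normalCore) := by
  set H := MulAction.stabilizer G x with hHdef
  have hHU' : H ≤ U := hHU.le
  have hHV' : H ≤ V := hHV.le
  -- every element of an overgroup K of H factors as (K ⊓ A) * H
  have decomp : ∀ (K : Subgroup G), H ≤ K → ∀ k ∈ K,
      ∃ a ∈ K ⊓ A, ∃ h ∈ H, a * h = k := by
    intro K hK k hk
    have hmem : k ∈ (A : Set G) * (H : Set G) := by rw [hAH]; trivial
    obtain ⟨a, ha, h, hh, hah⟩ := Set.mem_mul.mp hmem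
    have haK : a ∈ K := by
      have : k * h⁻¹ ∈ K := mul_mem hk (K.inv_mem (hK hh))
      rwa [← hah, mul_inv_cancel_right] at this
    exact ⟨a, Subgroup.mem_inf.mpr ⟨haK, ha⟩, h, hh, hah⟩
  -- commuting of products of overgroups of H
  have key : ∀ (K L : Subgroup G), H ≤ K → H ≤ L → ∀ g : G,
      (∃ k ∈ K, ∃ l ∈ L, k * l = g) → ∃ l ∈ L, ∃ k ∈ K, l * k = g := by
    rintro K L hK hL g ⟨k, hk, l, hl, rfl⟩
    obtain ⟨a, haKA, h, hh, rfl⟩ := decomp K hK k hk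
    have hl' : h * l ∈ L := mul_mem (hL hh) hl
    obtain ⟨b, hbLA, h', hh', hb⟩ := decomp L hL (h * l) hl'
    have hab : a * b ∈ ((K ⊓ A : Subgroup G) : Set G) * ((L ⊓ A : Subgroup G) : Set G) :=
      ⟨a, haKA, b, hbLA, rfl⟩
    rw [hQH _ _ (inf_le_right.trans le_rfl) (inf_le_right.trans le_rfl)] at hab
    obtain ⟨b', hb', a', ha', hba⟩ := Set.mem_mul.mp hab
    refine ⟨b', (Subgroup.mem_inf.mp hb').1, a' * h',
      mul_mem (Subgroup.mem_inf.mp ha').1 (hK hh'), ?_⟩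
    calc b' * (a' * h') = (b' * a') * h' := by rw [mul_assoc]
      _ = (a * b) * h' := by rw [hba]
      _ = a * (b * h') := by rw [mul_assoc]
      _ = a * (h * l) := by rw [hb]
      _ = a * h * l := by rw [mul_assoc]
  have hswap := key U V hHU' hHV'
  have hswap' := key V U hHV' hHU'
  -- the set U*V is a subgroup
  let W : Subgroup G :=
    { carrier := {g | ∃ u ∈ U, ∃ v ∈ V, u * v = g}
      one_mem' := ⟨1, one_mem U, 1, one_mem V, one_mul 1⟩
      mul_mem' := by
        rintro g₁ g₂ ⟨u₁, hu₁, v₁, hv₁, rfl⟩ ⟨u₂, hu₂, v₂, hv₂, rfl⟩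
        obtain ⟨u₃, hu₃, v₃, hv₃, h3⟩ := hswap' (v₁ * u₂) ⟨v₁, hv₁, u₂, hu₂, rfl⟩
        refine ⟨u₁ * u₃, mul_mem hu₁ hu₃, v₃ * v₂, mul_mem hv₃ hv₂, ?_⟩
        rw [mul_assoc u₁ u₃, ← mul_assoc u₃, h3]
        group
      inv_mem' := by
        rintro g ⟨u, hu, v, hv, rfl⟩
        obtain ⟨u', hu', v', hv', h'⟩ :=
          hswap' (v⁻¹ * u⁻¹) ⟨v⁻¹, inv_mem hv, u⁻¹, inv_mem hu, rfl⟩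
        exact ⟨u', hu', v', hv', by rw [h', mul_inv_rev]⟩ }
  have hVnleU : ¬ V ≤ U := by
    intro hle
    rcases lt_or_eq_of_le hle with h | h
    · exact hVmax U ⟨h, hUtop⟩
    · exact hUV h.symm
  have hUleW : U ≤ W := fun u hu => ⟨u, hu, 1, one_mem V, mul_one u⟩
  obtain ⟨v₀, hv₀V, hv₀U⟩ := SetLike.not_le_iff_exists.mp hVnleU
  have hUltW : U < W :=
    lt_of_le_of_ne hUleW (fun h => hv₀U (h ▸ ⟨1, one_mem U, v₀, hv₀V, one_mul v₀⟩))
  have hWtop : W = ⊤ := by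
    by_contra h
    exact hUmax W ⟨hUltW, lt_top_iff_ne_top.mpr h⟩
  have hGUV : ∀ g : G, ∃ u ∈ U, ∃ v ∈ V, u * v = g := by
    intro g
    have : g ∈ W := hWtop ▸ Subgroup.mem_top g
    exact this
  have hGVU : ∀ g : G, ∃ v ∈ V, ∃ u ∈ U, v * u = g := fun g => hswap g (hGUV g)
  -- U ⊓ V = H
  have hInf : U ⊓ V = H := by
    have h1 : H ≤ U ⊓ V := le_inf hHU' hHV'
    have h2 : U ⊓ V ≠ U := by
      intro h
      have hle : U ≤ V := inf_eq_left.mp h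
      rcases lt_or_eq_of_le hle with h' | h'
      · exact hVmax V (absurd ⟨h', hVtop⟩ (hUmax V))
      · exact hUV h'
    have h3 : U ⊓ V < U := lt_of_le_of_ne inf_le_left h2
    rcases lt_or_eq_of_le h1 with h | h
    · exact absurd ⟨h, h3⟩ (hHUmax (U ⊓ V))
    · exact h.symm
  by_cases hNV : U.normalCore ≤ V
  · -- right disjunct
    right
    have hNH : U.normalCore ≤ H := hInf ▸ le_inf U.normalCore_le hNV
    have hNcore : U.normalCore = H.normalCore :=
      le_antisymm (Subgroup.normal_le_normalCore.mpr hNH) (Subgroup.normalCore_mono hHU')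
    have hCH : coreIn V H ≤ H := by
      calc coreIn V H ≤ (H.subgroupOf V).map V.subtype :=
            Subgroup.map_mono (Subgroup.normalCore_le _)
        _ = H ⊓ V := Subgroup.subgroupOf_map_subtype H V
        _ ≤ H := inf_le_left
    have hCnorm : ∀ v : G, v ∈ V → ∀ c : G, c ∈ coreIn V H →
        v * c * v⁻¹ ∈ coreIn V H := by
      rintro v hv c ⟨c', hc', rfl⟩
      exact ⟨⟨v, hv⟩ * c' * ⟨v, hv⟩⁻¹,
        (Subgroup.normalCore_normal _).conj_mem c' hc' ⟨v, hv⟩, rfl⟩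
    have hCle : coreIn V H ≤ U.normalCore := by
      intro c hc
      have : ∀ b : G, b * c * b⁻¹ ∈ U := by
        intro b
        obtain ⟨u, hu, v, hv, rfl⟩ := hGUV b
        have h1 : v * c * v⁻¹ ∈ U := hHU' (hCH (hCnorm v hv c hc))
        have h2 : u * v * c * (u * v)⁻¹ = u * (v * c * v⁻¹) * u⁻¹ := by group
        rw [h2]
        exact mul_mem (mul_mem hu h1) (inv_mem hu)
      exact this
    have hNleC : U.normalCore ≤ coreIn V H := by
      intro n hn
      refine ⟨⟨n, hNV hn⟩, ?_, rfl⟩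
      have : ∀ b : V, b * ⟨n, hNV hn⟩ * b⁻¹ ∈ H.subgroupOf V := by
        intro b
        refine Subgroup.mem_subgroupOf.mpr ?_
        exact hNH ((Subgroup.normalCore_normal U).conj_mem n hn (b : G))
      exact this
    have hCN : U.normalCore = coreIn V H := le_antisymm hNleC hCle
    exact ⟨hCN, by rw [← hCN]; exact hNcore⟩
  · -- left disjunct
    left
    have hVN : V ⊔ U.normalCore = ⊤ := by
      have h1 : V < V ⊔ U.normalCore :=
        lt_of_le_of_ne le_sup_left (fun h => hNV (le_sup_right.trans h.ge))
      by_contra h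
      exact hVmax _ ⟨h1, lt_top_iff_ne_top.mpr h⟩
    have hVNdecomp : ∀ g : G, ∃ v ∈ V, ∃ n ∈ U.normalCore, v * n = g := by
      intro g
      have : g ∈ (V : Set G) * (U.normalCore : Set G) := by
        rw [← Subgroup.mul_normal, hVN]
        trivial
      exact Set.mem_mul.mp this
    -- the bijection
    have hrespects : ∀ a b : V, @Setoid.r _ (QuotientGroup.leftRel (H.subgroupOf V)) a b →
        (QuotientGroup.mk (a : G) : G ⧸ U) = QuotientGroup.mk (b : G) := by
      intro a b hab
      rw [QuotientGroup.leftRel_apply] at hab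
      exact QuotientGroup.eq.mpr (hHU' (Subgroup.mem_subgroupOf.mp hab))
    let f : V ⧸ H.subgroupOf V → G ⧸ U := fun q =>
      Quotient.liftOn' q (fun v => (QuotientGroup.mk (v : G) : G ⧸ U)) hrespects
    have hf_mk : ∀ w : V, f (QuotientGroup.mk w) = QuotientGroup.mk (w : G) := fun _ => rfl
    have hfinj : Function.Injective f := by
      intro q₁ q₂ hq
      obtain ⟨a, rfl⟩ := QuotientGroup.mk_surjective q₁
      obtain ⟨b, rfl⟩ := QuotientGroup.mk_surjective q₂
      have h' : (QuotientGroup.mk (a : G) : G ⧸ U) = QuotientGroup.mk (b : G) := hq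
      have h1 : (a : G)⁻¹ * b ∈ U := QuotientGroup.eq.mp h'
      have h2 : (a : G)⁻¹ * b ∈ V := mul_mem (inv_mem a.2) b.2
      have h3 : (a : G)⁻¹ * b ∈ H := hInf ▸ Subgroup.mem_inf.mpr ⟨h1, h2⟩
      exact QuotientGroup.eq.mpr (Subgroup.mem_subgroupOf.mpr h3)
    have hfsurj : Function.Surjective f := by
      intro q
      obtain ⟨g, rfl⟩ := QuotientGroup.mk_surjective q
      obtain ⟨v, hv, u, hu, hvu⟩ := hGVU g
      refine ⟨QuotientGroup.mk ⟨v, hv⟩, ?_⟩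
      rw [hf_mk]
      refine QuotientGroup.eq.mpr ?_
      have : v⁻¹ * g = u := by rw [← hvu, inv_mul_cancel_left]
      rw [this]; exact hu
    let e' : (V ⧸ H.subgroupOf V) ≃ (G ⧸ U) := Equiv.ofBijective f ⟨hfinj, hfsurj⟩
    let e : (G ⧸ U) ≃ (V ⧸ H.subgroupOf V) := e'.symm
    have he_f : ∀ z, e (f z) = z := fun z => e'.symm_apply_apply z
    have he_symm : ∀ z, e.symm z = f z := fun _ => rfl
    -- the key commutation
    have hcomm : ∀ v : V,
        e.permCongr (MulAction.toPermHom G (G ⧸ U) (v : G)) =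
          MulAction.toPermHom V (V ⧸ H.subgroupOf V) v := by
      intro v
      ext z
      obtain ⟨w, rfl⟩ := QuotientGroup.mk_surjective z
      show e ((v : G) • (e.symm (QuotientGroup.mk w))) = v • (QuotientGroup.mk w)
      rw [he_symm, hf_mk]
      have h1 : (v : G) • (QuotientGroup.mk (w : G) : G ⧸ U) =
          QuotientGroup.mk ((v * w : V) : G) := rfl
      rw [h1, ← hf_mk (v * w), he_f]
      rfl
    refine ⟨e, fun σ => ⟨?_, ?_⟩⟩
    · rintro ⟨g, rfl⟩
      obtain ⟨v, hv, n, hn, hvn⟩ := hVNdecomp g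
      have hgv : MulAction.toPermHom G (G ⧸ U) g =
          MulAction.toPermHom G (G ⧸ U) v := by
        ext z
        obtain ⟨a, rfl⟩ := QuotientGroup.mk_surjective z
        show g • (QuotientGroup.mk a : G ⧸ U) = v • (QuotientGroup.mk a)
        show (QuotientGroup.mk (g * a) : G ⧸ U) = QuotientGroup.mk (v * a)
        refine QuotientGroup.eq.mpr ?_
        have h1 : (g * a)⁻¹ * (v * a) = a⁻¹ * n⁻¹ * a := by rw [← hvn]; group
        rw [h1]
        have : a⁻¹ * n⁻¹ * (a⁻¹)⁻¹ ∈ U.normalCore :=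
          (Subgroup.normalCore_normal U).conj_mem n⁻¹ (inv_mem hn) a⁻¹
        rw [inv_inv] at this
        exact U.normalCore_le this
      rw [hgv]
      exact ⟨⟨v, hv⟩, (hcomm ⟨v, hv⟩).symm⟩
    · rintro ⟨v, hveq⟩
      refine ⟨(v : G), e.permCongr.injective ?_⟩
      rw [hcomm v, hveq]
end

section
/- Let G be a group acting faithfully and transitively on a finite set with point stabilizer H, and let A be a transitive Dedekind subgroup of G (every subgroup of A is normal in A). If G > U > H and G > V > H are distinct maximal chains of subgroups, then the coset action of G on G/U is isomorphic as a permutation action to the action of V on V/H. -/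
/-!
Let `N` be the normal core of `U`. Since `A` normalizes `U ⊓ A` and `G = A H` with `H ≤ U`,
every conjugate of `U ⊓ A` lies in `U`, so `U ⊓ A ≤ N`. As `U = (U ⊓ A) H > H`, the
subgroup `U ⊓ A` is not contained in `U ⊓ V = H` (maximality of `H` in `U`), so `N ⊄ V` and
`V N = G` by maximality of `V`. Hence `vH ↦ vU` is a `V`-equivariant bijection `V/H → G/U`,
and since `N` acts trivially on `G/U`, the groups `G` and `V` induce the same permutations.
-/

open scoped Pointwise

namespace Subgroup

variable {G : Type*} [Group G]

theorem coe_inf_mul_of_mul_eq_univ {A H U : Subgroup G}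
    (hAH : (A : Set G) * (H : Set G) = Set.univ) (hHU : H ≤ U) :
    ((U ⊓ A : Subgroup G) : Set G) * H = U := by
  rw [inf_mul_assoc U A H hHU, hAH, Set.inter_univ]

theorem inf_le_normalCore_of_mul_eq_univ {A H U : Subgroup G}
    (hAH : (A : Set G) * (H : Set G) = Set.univ) (hHU : H ≤ U)
    (hnormal : ((U ⊓ A).subgroupOf A).Normal) :
    U ⊓ A ≤ U.normalCore := by
  intro k hk b
  obtain ⟨a, ha, h, hh, hb⟩ : b⁻¹ ∈ (A : Set G) * H := hAH ▸ Set.mem_univ _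
  have hconj : a⁻¹ * k * a ∈ U := by
    simpa [mem_subgroupOf] using
      hnormal.conj_mem ⟨k, hk.2⟩ (by simpa [mem_subgroupOf] using hk.1) ⟨a, ha⟩⁻¹
  have hb' : b = h⁻¹ * a⁻¹ := by rw [← inv_inv b, ← hb, mul_inv_rev]
  have : h⁻¹ * (a⁻¹ * k * a) * h ∈ U :=
    U.mul_mem (U.mul_mem (U.inv_mem (hHU hh)) hconj) (hHU hh)
  simpa [hb', mul_assoc] using this

theorem inf_eq_of_not_le {H U V : Subgroup G} (hHU : H ≤ U) (hHV : H ≤ V) (hUV : ¬U ≤ V)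
    (hHUmax : ∀ W : Subgroup G, ¬(H < W ∧ W < U)) : U ⊓ V = H := by
  by_contra hne
  exact hHUmax (U ⊓ V) ⟨lt_of_le_of_ne (le_inf hHU hHV) (Ne.symm hne),
    inf_lt_left.mpr hUV⟩

def quotientSubgroupOfToQuotient {H U : Subgroup G} (hHU : H ≤ U) (V : Subgroup G) :
    V ⧸ H.subgroupOf V → G ⧸ U :=
  Quotient.map' Subtype.val fun _ _ h => by
    rw [QuotientGroup.leftRel_apply] at h ⊢
    exact hHU h

theorem quotientSubgroupOfToQuotient_smul {H U : Subgroup G} (hHU : H ≤ U) {V : Subgroup G}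
    (v : V) (q : V ⧸ H.subgroupOf V) :
    quotientSubgroupOfToQuotient hHU V (v • q) =
      (v : G) • quotientSubgroupOfToQuotient hHU V q :=
  Quotient.inductionOn' q fun _ => rfl

theorem quotientSubgroupOfToQuotient_bijective {H U V : Subgroup G} (hHU : H ≤ U)
    (hUV : U ⊓ V ≤ H) (hsup : V ⊔ U.normalCore = ⊤) :
    Function.Bijective (quotientSubgroupOfToQuotient hHU V) := by
  constructor
  · rintro ⟨v⟩ ⟨w⟩ hvw
    exact QuotientGroup.eq.mpr (hUV ⟨QuotientGroup.eq.mp hvw, (v⁻¹ * w).2⟩)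
  · rintro ⟨g⟩
    obtain ⟨v, hv, n, hn, rfl⟩ : g ∈ (V : Set G) * U.normalCore := by
      rw [← mul_normal, hsup]; trivial
    exact ⟨(⟨v, hv⟩ : V), QuotientGroup.eq.mpr (by simpa using U.normalCore_le hn)⟩

end Subgroup

namespace MulAction

theorem mem_range_toPermHom_iff_of_equivariant {G X Y : Type*} [Group G]
    [MulAction G X] {V : Subgroup G} [MulAction V Y]
    (hV : Codisjoint V (toPermHom G X).ker) (e : Y ≃ X)
    (he : ∀ (v : V) (y : Y), e (v • y) = (v : G) • e y) (σ : Equiv.Perm X) :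
    σ ∈ (toPermHom G X).range ↔ e.symm.permCongr σ ∈ (toPermHom V Y).range := by
  have hconj : ∀ v : V, toPermHom V Y v = e.symm.permCongr (toPermHom G X v) := by
    intro v
    ext y
    simp [← he]
  rw [← Subgroup.map_eq_range_iff.mpr hV]
  simp only [Subgroup.mem_map, MonoidHom.mem_range, hconj, e.symm.permCongr.injective.eq_iff]
  exact ⟨fun ⟨g, hg, hσ⟩ => ⟨⟨g, hg⟩, hσ⟩, fun ⟨v, hσ⟩ => ⟨v, v.2, hσ⟩⟩

end MulAction

theorem stmt_11_general {G : Type*} [Group G] {X : Type*} [MulAction G X] (x : X)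
    (A U V : Subgroup G)
    (hAH : (A : Set G) * (MulAction.stabilizer G x : Set G) = Set.univ)
    (hDed : ∀ J : Subgroup G, J ≤ A → (J.subgroupOf A).Normal)
    (hHU : MulAction.stabilizer G x < U)
    (hHV : MulAction.stabilizer G x < V) (hVtop : V < ⊤)
    (hUmax : ∀ W : Subgroup G, ¬(U < W ∧ W < ⊤))
    (hHUmax : ∀ W : Subgroup G, ¬(MulAction.stabilizer G x < W ∧ W < U))
    (hVmax : ∀ W : Subgroup G, ¬(V < W ∧ W < ⊤))
    (hUV : U ≠ V) :
    ∃ e : (G ⧸ U) ≃ (V ⧸ (MulAction.stabilizer G x).subgroupOf V),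
      ∀ σ : Equiv.Perm (G ⧸ U),
        σ ∈ (MulAction.toPermHom G (G ⧸ U)).range ↔
          e.permCongr σ ∈
            (MulAction.toPermHom V
              (V ⧸ (MulAction.stabilizer G x).subgroupOf V)).range := by
  set H := MulAction.stabilizer G x
  have hinf : U ⊓ V = H := Subgroup.inf_eq_of_not_le hHU.le hHV.le
    (fun hle => hUmax V ⟨lt_of_le_of_ne hle hUV, hVtop⟩) hHUmax
  have hcore : U ⊓ A ≤ U.normalCore :=
    Subgroup.inf_le_normalCore_of_mul_eq_univ hAH hHU.le (hDed _ inf_le_right)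
  have hcore_not_le : ¬U.normalCore ≤ V := by
    intro hle
    have hUA : U ⊓ A ≤ H := hinf ▸ le_inf (hcore.trans U.normalCore_le) (hcore.trans hle)
    refine hHU.not_ge fun u hu => ?_
    rw [← SetLike.mem_coe, ← Subgroup.coe_inf_mul_of_mul_eq_univ hAH hHU.le] at hu
    obtain ⟨k, hk, h, hh, rfl⟩ := hu
    exact H.mul_mem (hUA hk) hh
  have hsup : V ⊔ U.normalCore = ⊤ := by
    by_contra hne
    exact hVmax _ ⟨left_lt_sup.mpr hcore_not_le, lt_top_iff_ne_top.mpr hne⟩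
  refine ⟨(Equiv.ofBijective _
    (Subgroup.quotientSubgroupOfToQuotient_bijective hHU.le hinf.le hsup)).symm, ?_⟩
  exact MulAction.mem_range_toPermHom_iff_of_equivariant
    (by rwa [codisjoint_iff, ← Subgroup.normalCore_eq_ker]) _
    (Subgroup.quotientSubgroupOfToQuotient_smul hHU.le)

/-- For a faithful transitive action on a finite set with point stabilizer `H`
and a transitive Dedekind subgroup `A`, if `G > U > H` and `G > V > H` are
distinct maximal chains, then the coset action of `G` on `G/U` is isomorphic as
a permutation action to the action of `V` on `V/H`. -/
theorem stmt_11 {G : Type*} [Group G] {X : Type*} [Finite X] [MulAction G X]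
    [MulAction.IsPretransitive G X] [FaithfulSMul G X] (x : X)
    (A U V : Subgroup G)
    (hAH : (A : Set G) * (MulAction.stabilizer G x : Set G) = Set.univ)
    (hDed : ∀ J : Subgroup G, J ≤ A → (J.subgroupOf A).Normal)
    (hHU : MulAction.stabilizer G x < U) (hUtop : U < ⊤)
    (hHV : MulAction.stabilizer G x < V) (hVtop : V < ⊤)
    (hUmax : ∀ W : Subgroup G, ¬(U < W ∧ W < ⊤))
    (hHUmax : ∀ W : Subgroup G, ¬(MulAction.stabilizer G x < W ∧ W < U))
    (hVmax : ∀ W : Subgroup G, ¬(V < W ∧ W < ⊤))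
    (hHVmax : ∀ W : Subgroup G, ¬(MulAction.stabilizer G x < W ∧ W < V))
    (hUV : U ≠ V) :
    ∃ e : (G ⧸ U) ≃ (V ⧸ (MulAction.stabilizer G x).subgroupOf V),
      ∀ σ : Equiv.Perm (G ⧸ U),
        σ ∈ (MulAction.toPermHom G (G ⧸ U)).range ↔
          e.permCongr σ ∈
            (MulAction.toPermHom V
              (V ⧸ (MulAction.stabilizer G x).subgroupOf V)).range :=
  stmt_11_general x A U V hAH hDed hHU hHV hVtop hUmax hHUmax hVmax hUV
end

section
/- Let G be a group, H ≤ G, and A ≤ G a Dedekind subgroup with AH = G. If U is a subgroup with H ≤ U ≤ G, then core_G(U) ⊇ U ∩ A. In particular, if additionally core_G(U) ≤ H then U = H. -/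
open scoped Pointwise

/-- If `A` is a Dedekind subgroup with `AH = G` and `H ≤ U`, then
`U ⊓ A ≤ core_G(U)`; in particular if `core_G(U) ≤ H` then `U = H`. -/
theorem stmt_12 {G : Type*} [Group G] (H A U : Subgroup G)
    (hAH : (A : Set G) * (H : Set G) = Set.univ)
    (hDed : ∀ J : Subgroup G, J ≤ A → (J.subgroupOf A).Normal)
    (hHU : H ≤ U) :
    U ⊓ A ≤ U.normalCore ∧ (U.normalCore ≤ H → U = H) := by
  have hnorm := hDed (U ⊓ A) inf_le_right
  have key : U ⊓ A ≤ U.normalCore := by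
    intro x hx
    show ∀ g : G, g * x * g⁻¹ ∈ U
    intro g
    -- write g⁻¹ = a * h with a ∈ A, h ∈ H
    have : g⁻¹ ∈ (A : Set G) * (H : Set G) := by rw [hAH]; trivial
    obtain ⟨a, ha, h, hh, hg⟩ := this
    have hg' : g = h⁻¹ * a⁻¹ := by
      have := congrArg Inv.inv hg
      simpa [mul_inv_rev] using this.symm
    have hxA : x ∈ A := hx.2
    have hconj : a⁻¹ * x * a ∈ U ⊓ A := by
      have := hnorm.conj_mem ⟨x, hxA⟩ (by simpa [Subgroup.mem_subgroupOf, Subgroup.mem_inf] using hx.1)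
        ⟨a, ha⟩⁻¹
      have hU' : a⁻¹ * x * a ∈ U := by
        simpa [Subgroup.mem_subgroupOf, Subgroup.mem_inf, mul_assoc] using this
      exact ⟨hU', A.mul_mem (A.mul_mem (A.inv_mem ha) hx.2) ha⟩
    have hU : a⁻¹ * x * a ∈ U := hconj.1
    have hhU : h ∈ U := hHU hh
    have : h⁻¹ * (a⁻¹ * x * a) * h ∈ U := U.mul_mem (U.mul_mem (U.inv_mem hhU) hU) hhU
    rw [hg']
    simpa [mul_assoc, mul_inv_rev] using this
  refine ⟨key, fun hcore => ?_⟩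
  apply le_antisymm _ hHU
  intro u hu
  have : u ∈ (A : Set G) * (H : Set G) := by rw [hAH]; trivial
  obtain ⟨a, ha, h, hh, hah⟩ := this
  have haU : a ∈ U := by
    have : a = u * h⁻¹ := by rw [← hah]; group
    rw [this]; exact U.mul_mem hu (U.inv_mem (hHU hh))
  have : a ∈ H := hcore (key ⟨haU, ha⟩)
  rw [← hah]; exact H.mul_mem this hh
end

section
/- Let G be a finite group with subgroups H ≤ U ≤ G and suppose A ≤ G is Dedekind with AH = G. Then there is a group homomorphism from N_G(H)/H to N_{G}(U)/U induced by inclusion, whose kernel is (N_G(H) ∩ U)/H = N_U(H)/H. -/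
/-!
Because `AH = G`, Dedekind's modular law gives `K = (A ⊓ K) ⊔ H` for every subgroup
`K ⊇ H`. For `K = U`: an element of `A` normalizing `H` also normalizes `A ⊓ U` (every
subgroup of `A` is normal in `A`), hence normalizes `U`. For `K = N_G(H)` this yields
`N_G(H) ≤ N_G(U)`, so inclusion induces `N_G(H)/H → N_G(U)/U`, whose kernel is made of
the cosets of the elements of `N_G(H)` lying in `U`.
-/

open scoped Pointwise

namespace Subgroup

variable {G : Type*} [Group G]

theorem inf_sup_eq_of_mul_eq_univ {A H K : Subgroup G}
    (hAH : (A : Set G) * (H : Set G) = Set.univ) (hHK : H ≤ K) : (A ⊓ K) ⊔ H = K := by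
  refine le_antisymm (sup_le inf_le_right hHK) fun k hk => ?_
  obtain ⟨a, ha, h, hh, rfl⟩ : k ∈ (A : Set G) * (H : Set G) := hAH ▸ Set.mem_univ k
  have haK : a ∈ K := by simpa using K.mul_mem hk (K.inv_mem (hHK hh))
  exact mul_mem_sup ⟨ha, haK⟩ hh

theorem normalizer_le_normalizer_of_mul_eq_univ {A H U : Subgroup G}
    (hAH : (A : Set G) * (H : Set G) = Set.univ) (hHU : H ≤ U)
    (hA : A ⊓ normalizer (H : Set G) ≤ normalizer ((A ⊓ U : Subgroup G) : Set G)) :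
    normalizer (H : Set G) ≤ normalizer (U : Set G) := by
  have hU : normalizer ((A ⊓ U : Subgroup G) : Set G) ⊓ normalizer (H : Set G) ≤
      normalizer (U : Set G) := by
    simpa only [inf_sup_eq_of_mul_eq_univ hAH hHU] using
      normalizer_inf_normalizer_le_normalizer_sup (A ⊓ U) H
  rw [← inf_sup_eq_of_mul_eq_univ hAH (le_normalizer (H := H))]
  exact sup_le (le_inf hA inf_le_right |>.trans hU) (hHU.trans le_normalizer)

end Subgroup

theorem stmt_19_general {G : Type*} [Group G] (H A U : Subgroup G)
    (hAH : (A : Set G) * (H : Set G) = Set.univ)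
    (hDed : ∀ J : Subgroup G, J ≤ A → (J.subgroupOf A).Normal)
    (hHU : H ≤ U) :
    ∃ f : (Subgroup.normalizer (H : Set G) ⧸ H.subgroupOf (Subgroup.normalizer (H : Set G))) →*
        (Subgroup.normalizer (U : Set G) ⧸ U.subgroupOf (Subgroup.normalizer (U : Set G))),
      (∀ (g : Subgroup.normalizer (H : Set G)) (hg : (g : G) ∈ Subgroup.normalizer (U : Set G)),
        f (QuotientGroup.mk g) = QuotientGroup.mk ⟨(g : G), hg⟩) ∧
      f.ker = Subgroup.map (QuotientGroup.mk' (H.subgroupOf (Subgroup.normalizer (H : Set G))))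
        ((Subgroup.normalizer (H : Set G) ⊓ U).subgroupOf (Subgroup.normalizer (H : Set G))) := by
  have hA : A ≤ Subgroup.normalizer ((A ⊓ U : Subgroup G) : Set G) :=
    Subgroup.le_normalizer_of_normal_subgroupOf (hK := hDed _ inf_le_left) inf_le_left
  have hN := Subgroup.normalizer_le_normalizer_of_mul_eq_univ hAH hHU (inf_le_left.trans hA)
  have hle : H.subgroupOf (Subgroup.normalizer (H : Set G)) ≤
      (U.subgroupOf (Subgroup.normalizer (U : Set G))).comap (Subgroup.inclusion hN) :=
    fun _ hx => hHU hx
  refine ⟨QuotientGroup.map _ _ (Subgroup.inclusion hN) hle, fun _ _ => rfl, ?_⟩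
  rw [QuotientGroup.ker_map]
  congr 1
  ext g
  simp [Subgroup.mem_subgroupOf]

/-- If `A` is a Dedekind subgroup with `AH = G` and `H ≤ U`, then there is a
homomorphism `N_G(H)/H → N_G(U)/U` induced by inclusion, whose kernel is
`(N_G(H) ⊓ U)/H = N_U(H)/H`. -/
theorem stmt_19 {G : Type*} [Group G] [Finite G] (H A U : Subgroup G)
    (hAH : (A : Set G) * (H : Set G) = Set.univ)
    (hDed : ∀ J : Subgroup G, J ≤ A → (J.subgroupOf A).Normal)
    (hHU : H ≤ U) :
    ∃ f : (Subgroup.normalizer (H : Set G) ⧸ H.subgroupOf (Subgroup.normalizer (H : Set G))) →*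
        (Subgroup.normalizer (U : Set G) ⧸ U.subgroupOf (Subgroup.normalizer (U : Set G))),
      (∀ (g : Subgroup.normalizer (H : Set G)) (hg : (g : G) ∈ Subgroup.normalizer (U : Set G)),
        f (QuotientGroup.mk g) = QuotientGroup.mk ⟨(g : G), hg⟩) ∧
      f.ker = Subgroup.map (QuotientGroup.mk' (H.subgroupOf (Subgroup.normalizer (H : Set G))))
        ((Subgroup.normalizer (H : Set G) ⊓ U).subgroupOf (Subgroup.normalizer (H : Set G))) :=
  stmt_19_general H A U hAH hDed hHU
end
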